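/- Let $n < q \le p < \infty$ and let $h \in L_p(\mathbb{R}^n)$ be nonnegative. Then the geodesic distance $d_q(x,y:h)$ satisfies $d_q(x,y:h) \le C \|x-y\|^{1 - n/p} \|h\|_{L_p(\mathbb{R}^n)}$ for all $x,y \in \mathbb{R}^n$, where $C$ depends only on $n$, $p$, $q$. In particular $d_q(x,y:h) \to 0$ as $\|x-y\| \to 0$. -/

import Mathlib

open MeasureTheory ENNReal Metric

noncomputable def cubeSup (n : ℕ) (q : ℝ) (w : (Fin n → ℝ) → ℝ≥0∞) (x y : Fin n → ℝ) : ℝ≥0∞ :=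
  ⨆ (c : Fin n → ℝ) (r : ℝ) (_ : 0 < r) (_ : x ∈ closedBall c r) (_ : y ∈ closedBall c r),
    ((∫⁻ u in closedBall c r, w u) / volume (closedBall c r)) ^ (1 / q)

noncomputable def deltaQ (n : ℕ) (q : ℝ) (w : (Fin n → ℝ) → ℝ≥0∞) (x y : Fin n → ℝ) : ℝ≥0∞ :=
  ENNReal.ofReal ‖x - y‖ * cubeSup n q w x y

noncomputable def geoQ (n : ℕ) (q : ℝ) (w : (Fin n → ℝ) → ℝ≥0∞) (x y : Fin n → ℝ) : ℝ≥0∞ :=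
  ⨅ (m : ℕ) (z : ℕ → Fin n → ℝ) (_ : z 0 = x) (_ : z m = y),
    ∑ i ∈ Finset.range m, deltaQ n q w (z i) (z (i + 1))

/-!
A one-step chain gives `d_q(x, y : h) ≤ δ_q(x, y : h)`, so it suffices to bound the `q`-average of
`h` over a cube `Q` containing `x` and `y`. Hölder's inequality bounds it by `‖h‖_p |Q|^{-1/p}`, and
`|Q| ≥ ‖x - y‖ⁿ` since the side of `Q` is at least `‖x - y‖`; hence `C = 1` works.
-/

theorem geoQ_le_deltaQ (n : ℕ) (q : ℝ) (w : (Fin n → ℝ) → ℝ≥0∞) (x y : Fin n → ℝ) :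
    geoQ n q w x y ≤ deltaQ n q w x y := by
  let z : ℕ → Fin n → ℝ := fun i => if i = 0 then x else y
  calc geoQ n q w x y ≤ ∑ i ∈ Finset.range 1, deltaQ n q w (z i) (z (i + 1)) :=
        iInf_le_of_le 1 <| iInf_le_of_le z <| iInf_le_of_le rfl <| iInf_le_of_le rfl le_rfl
    _ = deltaQ n q w x y := by simp [z]

theorem pow_norm_sub_le_volume_closedBall {n : ℕ} {x y c : Fin n → ℝ} {r : ℝ}
    (hx : x ∈ closedBall c r) (hy : y ∈ closedBall c r) :
    ENNReal.ofReal ‖x - y‖ ^ n ≤ volume (closedBall c r) := by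
  have hr : 0 ≤ r := nonempty_closedBall.mp ⟨x, hx⟩
  have hxy : ‖x - y‖ ≤ 2 * r := by
    rw [← dist_eq_norm]
    linarith [dist_triangle_right x y c, mem_closedBall.mp hx, mem_closedBall.mp hy]
  rw [Real.volume_pi_closedBall c hr, Fintype.card_fin, ← ENNReal.ofReal_pow (norm_nonneg _)]
  exact ENNReal.ofReal_le_ofReal (pow_le_pow_left₀ (norm_nonneg _) hxy n)

theorem rpow_setLIntegral_enorm_rpow_div_measure_le {α ε : Type*} [MeasurableSpace α]
    [TopologicalSpace ε] [ContinuousENorm ε] {μ : Measure α} {s : Set α} {f : α → ε} {p q : ℝ}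
    (hq : 0 < q) (hqp : q ≤ p) (hf : AEStronglyMeasurable f μ) (hs0 : μ s ≠ 0) (hs : μ s ≠ ∞) :
    ((∫⁻ u in s, ‖f u‖ₑ ^ q ∂μ) / μ s) ^ (1 / q) ≤
      eLpNorm f (ENNReal.ofReal p) μ * μ s ^ (-(1 / p)) := by
  have hp : 0 < p := hq.trans_le hqp
  have hq_norm :
      (∫⁻ u in s, ‖f u‖ₑ ^ q ∂μ) ^ (1 / q) = eLpNorm f (ENNReal.ofReal q) (μ.restrict s) := by
    rw [eLpNorm_eq_lintegral_rpow_enorm_toReal (by simpa using hq) ofReal_ne_top,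
      toReal_ofReal hq.le]
  have holder : eLpNorm f (ENNReal.ofReal q) (μ.restrict s) ≤
      eLpNorm f (ENNReal.ofReal p) μ * μ s ^ (1 / q - 1 / p) := by
    calc eLpNorm f (ENNReal.ofReal q) (μ.restrict s)
        ≤ eLpNorm f (ENNReal.ofReal p) (μ.restrict s) * μ s ^ (1 / q - 1 / p) := by
          simpa [toReal_ofReal hq.le, toReal_ofReal hp.le] using
            eLpNorm_le_eLpNorm_mul_rpow_measure_univ (ofReal_le_ofReal hqp) hf.restrict
      _ ≤ eLpNorm f (ENNReal.ofReal p) μ * μ s ^ (1 / q - 1 / p) := by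
          gcongr
          exact Measure.restrict_le_self
  calc ((∫⁻ u in s, ‖f u‖ₑ ^ q ∂μ) / μ s) ^ (1 / q)
      = eLpNorm f (ENNReal.ofReal q) (μ.restrict s) / μ s ^ (1 / q) := by
        rw [ENNReal.div_rpow_of_nonneg _ _ (by positivity), hq_norm]
    _ ≤ eLpNorm f (ENNReal.ofReal p) μ * μ s ^ (1 / q - 1 / p) / μ s ^ (1 / q) := by gcongr
    _ = eLpNorm f (ENNReal.ofReal p) μ * μ s ^ (-(1 / p)) := by
        rw [mul_div_assoc, ← ENNReal.rpow_sub _ _ hs0 hs]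
        ring_nf

theorem cubeSup_enorm_rpow_le {n : ℕ} {q p : ℝ} {ε : Type*} [TopologicalSpace ε]
    [ContinuousENorm ε] (hq : 0 < q) (hqp : q ≤ p) {h : (Fin n → ℝ) → ε}
    (hh : AEStronglyMeasurable h volume) (x y : Fin n → ℝ) :
    cubeSup n q (fun u => ‖h u‖ₑ ^ q) x y ≤
      eLpNorm h (ENNReal.ofReal p) volume * ENNReal.ofReal ‖x - y‖ ^ (-((n : ℝ) / p)) := by
  refine iSup_le fun c => iSup_le fun r => iSup_le fun hr => iSup_le fun hx => iSup_le fun hy => ?_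
  have hV : ENNReal.ofReal ‖x - y‖ ^ n ≤ volume (closedBall c r) :=
    pow_norm_sub_le_volume_closedBall hx hy
  have hV0 : volume (closedBall c r) ≠ 0 := (measure_closedBall_pos volume c hr).ne'
  have hV_top : volume (closedBall c r) ≠ ∞ := measure_closedBall_lt_top.ne
  refine (rpow_setLIntegral_enorm_rpow_div_measure_le hq hqp hh hV0 hV_top).trans ?_
  gcongr eLpNorm h _ volume * ?_
  calc volume (closedBall c r) ^ (-(1 / p))
      ≤ (ENNReal.ofReal ‖x - y‖ ^ n) ^ (-(1 / p)) := by
        rw [ENNReal.rpow_neg, ENNReal.rpow_neg]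
        gcongr
        have hp : 0 < p := hq.trans_le hqp
        positivity
    _ = ENNReal.ofReal ‖x - y‖ ^ (-((n : ℝ) / p)) := by
        rw [← ENNReal.rpow_natCast, ← ENNReal.rpow_mul]
        ring_nf

theorem deltaQ_enorm_rpow_le {n : ℕ} {q p : ℝ} {ε : Type*} [TopologicalSpace ε]
    [ContinuousENorm ε] (hq : 0 < q) (hqp : q ≤ p) {h : (Fin n → ℝ) → ε}
    (hh : AEStronglyMeasurable h volume) (x y : Fin n → ℝ) :
    deltaQ n q (fun u => ‖h u‖ₑ ^ q) x y ≤
      ENNReal.ofReal (‖x - y‖ ^ (1 - (n : ℝ) / p)) * eLpNorm h (ENNReal.ofReal p) volume := by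
  rcases eq_or_ne x y with rfl | hxy
  · simp [deltaQ]
  have hd : 0 < ‖x - y‖ := norm_pos_iff.mpr (sub_ne_zero.mpr hxy)
  calc deltaQ n q (fun u => ‖h u‖ₑ ^ q) x y
      ≤ ENNReal.ofReal ‖x - y‖ ^ (1 : ℝ) *
          (eLpNorm h (ENNReal.ofReal p) volume * ENNReal.ofReal ‖x - y‖ ^ (-((n : ℝ) / p))) := by
        rw [ENNReal.rpow_one, deltaQ]
        gcongr
        exact cubeSup_enorm_rpow_le hq hqp hh x y
    _ = ENNReal.ofReal ‖x - y‖ ^ (1 - (n : ℝ) / p) * eLpNorm h (ENNReal.ofReal p) volume := by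
        rw [mul_left_comm, ← ENNReal.rpow_add _ _ (by simpa using hd) ofReal_ne_top, mul_comm]
        ring_nf
    _ = ENNReal.ofReal (‖x - y‖ ^ (1 - (n : ℝ) / p)) * eLpNorm h (ENNReal.ofReal p) volume := by
        rw [ENNReal.ofReal_rpow_of_pos hd]

theorem stmt_6 (n : ℕ) (q p : ℝ) (hq : (n : ℝ) < q) (hqp : q ≤ p) :
    ∃ C : ℝ, 0 < C ∧ ∀ (h : (Fin n → ℝ) → ℝ), (∀ u, 0 ≤ h u) →
      MemLp h (ENNReal.ofReal p) volume →
      ∀ x y : Fin n → ℝ,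
        geoQ n q (fun u => ENNReal.ofReal (h u) ^ q) x y ≤
          ENNReal.ofReal C * ENNReal.ofReal (‖x - y‖ ^ (1 - (n : ℝ) / p)) *
            eLpNorm h (ENNReal.ofReal p) volume := by
  have hq0 : 0 < q := (Nat.cast_nonneg n).trans_lt hq
  refine ⟨1, one_pos, fun h hpos hmem x y => ?_⟩
  have hw : (fun u => ENNReal.ofReal (h u) ^ q) = fun u => ‖h u‖ₑ ^ q := by
    simp only [Real.enorm_eq_ofReal (hpos _)]
  rw [hw, ofReal_one, one_mul]
  exact (geoQ_le_deltaQ n q _ x y).trans (deltaQ_enorm_rpow_le hq0 hqp hmem.1 x y)
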